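/- Let F be a conservative symmetric clone on a set A. If F contains a ∂-function (a ternary function with ∂(x,x,y)=∂(x,y,x)=∂(y,x,x)=x), then F satisfies Δ^∂: for every injective triple a ∈ A^3 and every a' in its range, F contains a ∂-function ∂' with ∂'(a) = a'. -/

import Mathlib

open Function

/-- `f` (an `n`-ary operation on `A`) preserves `H ⊆ A^Q` if `H` is closed under
pointwise application of `f`. -/
def ClPreserves {A Q : Type*} {n : ℕ} (f : (Fin n → A) → A) (H : Set (Q → A)) : Prop :=
  ∀ h : Fin n → Q → A, (∀ i, h i ∈ H) → (fun q => f fun i => h i q) ∈ H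

/-- `H` is a `Q`-invariant set of the family of operations `F`. -/
def ClInvariant {A Q : Type*} (F : ∀ n : ℕ, Set ((Fin n → A) → A)) (H : Set (Q → A)) : Prop :=
  ∀ (n : ℕ) (f : (Fin n → A) → A), f ∈ F n → ClPreserves f H

/-- `F` is a clone: contains all projections and is closed under composition. -/
def IsClone {A : Type*} (F : ∀ n : ℕ, Set ((Fin n → A) → A)) : Prop :=
  (∀ (n : ℕ) (i : Fin n), (fun x => x i) ∈ F n) ∧
  (∀ (n m : ℕ) (f : (Fin n → A) → A) (g : Fin n → (Fin m → A) → A),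
    f ∈ F n → (∀ i, g i ∈ F m) → (fun x => f fun i => g i x) ∈ F m)

/-- Restriction of `h : Q → A` to a subset `P ⊆ Q`. -/
def restrictTo {A Q : Type*} (P : Set Q) (h : Q → A) : P → A := fun x => h x

/-- `H(q) = {h q : h ∈ H}`. -/
def valuesAt {A Q : Type*} (H : Set (Q → A)) (q : Q) : Set A := (fun h => h q) '' H

/-- A ∂-function (majority/discriminator). -/
def IsPartialFn {A : Type*} (f : (Fin 3 → A) → A) : Prop :=
  ∀ x y : A, f ![x, x, y] = x ∧ f ![x, y, x] = x ∧ f ![y, x, x] = x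

/-- Condition Δ^∂. -/
def DeltaPartial {A : Type*} (F : ∀ n : ℕ, Set ((Fin n → A) → A)) : Prop :=
  ∀ a : Fin 3 → A, Function.Injective a → ∀ j : Fin 3,
    ∃ p ∈ F 3, IsPartialFn p ∧ p a = a j

/-- Condition Δ^s_n. -/
def DeltaS {A : Type*} (F : ∀ n : ℕ, Set ((Fin n → A) → A)) (n : ℕ) : Prop :=
  ∃ i : Fin n, ∀ a : Fin n → A, Function.Injective a → ∀ j : Fin n,
    ∃ s ∈ F n, s a = a j ∧ ∀ x : Fin n → A, ¬ Function.Injective x → s x = x i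

/-- Condition Δ^2. -/
def Delta2 {A : Type*} (F : ∀ n : ℕ, Set ((Fin n → A) → A)) : Prop :=
  ∀ a b : Fin 2 → A, Function.Injective a → Function.Injective b →
    Set.range a ≠ Set.range b → ∀ i j : Fin 2,
      ∃ w ∈ F 2, (∀ x : A, w (fun _ => x) = x) ∧ w a = a i ∧ w b = b j

/-- `H` weakly separates `p` from `q` at the point `a`. -/
def WeaklySeparates {A Q : Type*} (H : Set (Q → A)) (p q : Q) (a : A) : Prop :=
  ∃ h₁ ∈ H, ∃ h₂ ∈ H, h₁ p = a ∧ h₂ p = a ∧ h₁ q ≠ h₂ q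

/-- `H` strongly separates `p` from `q` at the point `a`. -/
def StronglySeparates {A Q : Type*} (H : Set (Q → A)) (p q : Q) (a : A) : Prop :=
  ∀ b ∈ valuesAt H q, ∃ h ∈ H, h p = a ∧ h q = b

/-- Every operation in `F` is conservative. -/
def IsConservative {A : Type*} (F : ∀ n : ℕ, Set ((Fin n → A) → A)) : Prop :=
  ∀ (n : ℕ), ∀ f ∈ F n, ∀ a : Fin n → A, f a ∈ Set.range a

/-- `F` is symmetric: closed under conjugation by permutations of `A`. -/
def IsSymmetric {A : Type*} (F : ∀ n : ℕ, Set ((Fin n → A) → A)) : Prop :=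
  ∀ (n : ℕ), ∀ f ∈ F n, ∀ σ : Equiv.Perm A, (fun a : Fin n → A => σ.symm (f (σ ∘ a))) ∈ F n

/-! Given a ∂-function `d` in `F` and an injective triple `a`, conservativity gives
`d a = a k` for some `k`. To move the value to `a j`, permute the arguments of `d` by the
transposition `(j k)` and conjugate by the transposition `(a j, a k)` of `A`: both moves
preserve being a ∂-function and membership in `F`, and together they fix the triple `a`
while the conjugation carries the value `a k` to `a j`. -/

theorem IsClone.comp_mem {A : Type*} {F : ∀ n : ℕ, Set ((Fin n → A) → A)} (hF : IsClone F)
    {n m : ℕ} {f : (Fin n → A) → A} (hf : f ∈ F n) (e : Fin n → Fin m) :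
    (fun v : Fin m → A => f (v ∘ e)) ∈ F m :=
  hF.2 n m f (fun i v => v (e i)) hf fun i => hF.1 m (e i)

namespace IsPartialFn

variable {A : Type*} {f : (Fin 3 → A) → A}

theorem iff_eq_of_forall_ne :
    IsPartialFn f ↔ ∀ (v : Fin 3 → A) (x : A) (i : Fin 3), (∀ k ≠ i, v k = x) → f v = x := by
  constructor
  · intro hf v x i h
    have hv : v = ![v 0, v 1, v 2] := by
      funext k
      fin_cases k <;> rfl
    fin_cases i
    · rw [hv, h 1 (by decide), h 2 (by decide)]
      exact (hf x (v 0)).2.2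
    · rw [hv, h 0 (by decide), h 2 (by decide)]
      exact (hf x (v 1)).2.1
    · rw [hv, h 0 (by decide), h 1 (by decide)]
      exact (hf x (v 2)).1
  · intro h x y
    refine ⟨h _ x 2 ?_, h _ x 1 ?_, h _ x 0 ?_⟩ <;>
      · intro k hk
        fin_cases k <;> simp_all

theorem comp_perm (hf : IsPartialFn f) (e : Equiv.Perm (Fin 3)) :
    IsPartialFn fun v => f (v ∘ e) := by
  rw [iff_eq_of_forall_ne] at hf ⊢
  intro v x i h
  refine hf (v ∘ e) x (e.symm i) fun k hk => h (e k) ?_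
  rintro rfl
  exact hk (e.symm_apply_apply k).symm

theorem conj (hf : IsPartialFn f) (σ : Equiv.Perm A) :
    IsPartialFn fun v => σ.symm (f (σ ∘ v)) := by
  rw [iff_eq_of_forall_ne] at hf ⊢
  intro v x i h
  rw [hf (σ ∘ v) (σ x) i fun k hk => congrArg σ (h k hk), Equiv.symm_apply_apply]

end IsPartialFn

theorem stmt_13 {A : Type*}
    (F : ∀ n : ℕ, Set ((Fin n → A) → A)) (hF : IsClone F)
    (hcons : IsConservative F) (hsym : IsSymmetric F)
    (hex : ∃ d ∈ F 3, IsPartialFn d) :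
    DeltaPartial F := by
  classical
  obtain ⟨d, hdF, hd⟩ := hex
  intro a ha j
  obtain ⟨k, hk⟩ := hcons 3 d hdF a
  set π := Equiv.swap j k
  set σ := Equiv.swap (a j) (a k)
  have hfix : (σ ∘ a) ∘ π = a := by
    rw [ha.swap_comp, comp_assoc, ← Equiv.Perm.coe_mul, Equiv.swap_mul_self,
      Equiv.Perm.coe_one, comp_id]
  refine ⟨fun v => σ.symm (d ((σ ∘ v) ∘ π)), hsym 3 _ (hF.comp_mem hdF π) σ,
    (hd.comp_perm π).conj σ, ?_⟩
  simp only [hfix, ← hk, σ, Equiv.symm_swap, Equiv.swap_apply_right]
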